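/- Let K be a nonempty set, 𝒜 the set of atoms of ℙ^K, X⁺ the free semigroup on 𝒜, and φ : X⁺ → ℙ^K the surjective semigroup homomorphism with φ(x_a) = a for each atom a. Let R ⊆ X⁺ × X⁺ be the set of pairs (x_a x_b, x_𝟙^m x_c) for atoms a, b, where m = μ(a+b) − 1 and c = a + b − m • 𝟙. Then the kernel congruence of φ equals the smallest congruence on X⁺ containing R; that is, ℙ^K has presentation ⟨X | R⟩ via φ. -/

import Mathlib

/-- The set of atoms of `ℙ^K`. -/
def PAtoms (K : Type*) : Type _ := {a : K → ℕ+ // ¬∃ b c : K → ℕ+, a = b + c}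

/-- `prependPow x m w` is the word `x^m * w`, i.e. `m` copies of the letter `x`
followed by the word `w` (just `w` when `m = 0`). -/
def prependPow {α : Type*} (x : α) : ℕ → FreeSemigroup α → FreeSemigroup α
  | 0, w => w
  | m + 1, w => FreeSemigroup.of x * prependPow x m w

/-- The set of relations `R`: the pairs `(x_a x_b, x_𝟙^m x_c)` where `a, b, c`
are atoms, `m = μ(a + b) - 1`, and `c = a + b - m • 𝟙`
(i.e. `a k + b k = m + c k` for all `k`).  Here `one` denotes the letter `x_𝟙`. -/
def PRel {K : Type*} (one : PAtoms K) (u v : FreeSemigroup (PAtoms K)) : Prop :=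
  ∃ (a b c : PAtoms K) (m : ℕ),
    m = (⨅ k : K, ((a.1 k : ℕ) + (b.1 k : ℕ))) - 1 ∧
    (∀ k : K, (a.1 k : ℕ) + (b.1 k : ℕ) = m + (c.1 k : ℕ)) ∧
    u = FreeSemigroup.of a * FreeSemigroup.of b ∧
    v = prependPow one m (FreeSemigroup.of c)

/-!
Every `f : K → ℕ+` factors as `f = (μ f - 1) • 𝟙 + c` with `c` an atom (an element with some
coordinate equal to `1`), which gives the normal form `x_𝟙^(μ f - 1) x_c` of a word with image
`f`. Modulo `R`, every word reduces to its normal form: `R` contains `x_a x_𝟙 = x_𝟙 x_a`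
(take `b = 𝟙`), so a letter `x_a` in front of a normal form moves past the block of `x_𝟙`'s,
and then `x_a x_c` is itself rewritten by `R` into a normal form. Two words with the same image
thus have the same normal form, so the kernel of `φ` is generated by `R`.
-/

theorem Con.ker_eq_of_rel_section {M N : Type*} [Mul M] [Mul N] (f : M →ₙ* N) {c : Con M}
    (s : N → M) (hc : c ≤ Con.ker f) (hs : ∀ x, c x (s (f x))) : Con.ker f = c := by
  refine le_antisymm (fun x y hxy => ?_) hc
  have hxy : f x = f y := hxy
  exact c.trans (hs x) (hxy ▸ c.symm (hs y))

section Words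

variable {α : Type*}

theorem prependPow_add (x : α) (m n : ℕ) (w : FreeSemigroup α) :
    prependPow x (m + n) w = prependPow x m (prependPow x n w) := by
  induction m with
  | zero => rw [Nat.zero_add]; rfl
  | succ p ih =>
    rw [Nat.succ_add]
    exact congrArg (FreeSemigroup.of x * ·) ih

variable (c : Con (FreeSemigroup α)) (x : α)

theorem Con.prependPow_rel (m : ℕ) {u v : FreeSemigroup α} (h : c u v) :
    c (prependPow x m u) (prependPow x m v) := by
  induction m with
  | zero => exact h
  | succ n ih => exact c.mul (c.refl _) ih

theorem Con.of_mul_prependPow_rel {a : α}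
    (hcomm : c (FreeSemigroup.of a * FreeSemigroup.of x) (FreeSemigroup.of x * FreeSemigroup.of a))
    (m : ℕ) (w : FreeSemigroup α) :
    c (FreeSemigroup.of a * prependPow x m w) (prependPow x m (FreeSemigroup.of a * w)) := by
  induction m with
  | zero => exact c.refl _
  | succ n ih =>
    show c (FreeSemigroup.of a * (FreeSemigroup.of x * prependPow x n w))
      (FreeSemigroup.of x * prependPow x n (FreeSemigroup.of a * w))
    rw [← mul_assoc]
    refine c.trans (c.mul hcomm (c.refl _)) ?_
    rw [mul_assoc]
    exact c.mul (c.refl _) ih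

end Words

section Atoms

variable {K : Type*}

theorem not_exists_eq_add_iff_exists_eq_one {a : K → ℕ+} :
    (¬∃ b c : K → ℕ+, a = b + c) ↔ ∃ k, a k = 1 := by
  constructor
  · intro ha
    by_contra! hne
    refine ha ⟨fun _ => 1, fun k => a k - 1, funext fun k => ?_⟩
    exact (PNat.add_sub_of_lt ((show 1 ≤ a k from one_le).lt_of_ne (hne k).symm)).symm
  · rintro ⟨k, hk⟩ ⟨b, c, rfl⟩
    have hk : (b k : ℕ) + c k = 1 := congrArg PNat.val hk
    have := (b k).pos
    have := (c k).pos
    omega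

noncomputable def mu (f : K → ℕ+) : ℕ := ⨅ k, (f k : ℕ)

theorem mu_le (f : K → ℕ+) (k : K) : mu f ≤ f k :=
  ciInf_le (OrderBot.bddBelow _) k

variable [Nonempty K]

theorem one_le_mu (f : K → ℕ+) : 1 ≤ mu f :=
  le_ciInf fun k => (f k).pos

theorem mu_of_coe_eq_add {f g : K → ℕ+} {m : ℕ} (h : ∀ k, (g k : ℕ) = f k + m) :
    mu g = mu f + m := by
  rw [mu, funext h]
  exact ((monotone_id.add_const m).map_ciInf_of_continuousAt
    (continuous_add_const m).continuousAt (OrderBot.bddBelow _)).symm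

theorem mu_atom (a : PAtoms K) : mu a.1 = 1 := by
  obtain ⟨k, hk⟩ := not_exists_eq_add_iff_exists_eq_one.mp a.2
  have := mu_le a.1 k
  have := one_le_mu a.1
  simp only [hk, PNat.one_coe] at *
  omega

noncomputable def atomPart (f : K → ℕ+) : PAtoms K :=
  ⟨fun k => ⟨f k - (mu f - 1), by have := mu_le f k; have := one_le_mu f; omega⟩,
    not_exists_eq_add_iff_exists_eq_one.mpr <| by
      obtain ⟨k, hk⟩ := ciInf_mem fun k => (f k : ℕ)
      have hk : (f k : ℕ) = mu f := hk
      refine ⟨k, PNat.coe_injective ?_⟩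
      change (f k : ℕ) - (mu f - 1) = 1
      have := one_le_mu f
      omega⟩

theorem coe_eq_atomPart_add (f : K → ℕ+) (k : K) :
    (f k : ℕ) = (atomPart f).1 k + (mu f - 1) := by
  have := mu_le f k
  have := one_le_mu f
  show (f k : ℕ) = (f k - (mu f - 1)) + (mu f - 1)
  omega

theorem atomPart_of_coe_eq_add {f g : K → ℕ+} {m : ℕ} (h : ∀ k, (g k : ℕ) = f k + m) :
    atomPart g = atomPart f := by
  refine Subtype.ext (funext fun k => PNat.coe_injective ?_)
  have hg := coe_eq_atomPart_add g k
  have hf := coe_eq_atomPart_add f k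
  have := one_le_mu f
  rw [mu_of_coe_eq_add h, h] at hg
  omega

theorem atomPart_atom (a : PAtoms K) : atomPart a.1 = a := by
  refine Subtype.ext (funext fun k => PNat.coe_injective ?_)
  have := coe_eq_atomPart_add a.1 k
  rw [mu_atom] at this
  exact this.symm

end Atoms

section Presentation

variable {K : Type*}

noncomputable def phi : FreeSemigroup (PAtoms K) →ₙ* Multiplicative (K → ℕ+) :=
  FreeSemigroup.lift fun a => Multiplicative.ofAdd a.1

theorem toAdd_phi_of (a : PAtoms K) : (phi (FreeSemigroup.of a)).toAdd = a.1 := by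
  simp [phi]

theorem toAdd_phi_mul (u v : FreeSemigroup (PAtoms K)) :
    (phi (u * v)).toAdd = (phi u).toAdd + (phi v).toAdd := by
  rw [map_mul, toAdd_mul]

variable {one : PAtoms K}

theorem coe_toAdd_phi_prependPow (hone : one.1 = fun _ => 1) (m : ℕ)
    (w : FreeSemigroup (PAtoms K)) (k : K) :
    ((phi (prependPow one m w)).toAdd k : ℕ) = m + (phi w).toAdd k := by
  induction m with
  | zero => exact (Nat.zero_add _).symm
  | succ n ih =>
    show ((phi (FreeSemigroup.of one * prependPow one n w)).toAdd k : ℕ) = _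
    rw [toAdd_phi_mul, toAdd_phi_of, Pi.add_apply, PNat.add_coe, ih, hone, PNat.one_coe]
    omega

theorem conGen_le_ker_phi (hone : one.1 = fun _ => 1) : conGen (PRel one) ≤ Con.ker phi := by
  refine Con.conGen_le.mpr ?_
  rintro _ _ ⟨a, b, c, m, -, hsum, rfl, rfl⟩
  refine Multiplicative.toAdd.injective (funext fun k => PNat.coe_injective ?_)
  rw [toAdd_phi_mul, toAdd_phi_of, toAdd_phi_of, Pi.add_apply, PNat.add_coe,
    coe_toAdd_phi_prependPow hone, toAdd_phi_of]
  exact hsum k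

variable [Nonempty K] (one)

noncomputable def nf (f : K → ℕ+) : FreeSemigroup (PAtoms K) :=
  prependPow one (mu f - 1) (FreeSemigroup.of (atomPart f))

theorem nf_of_coe_eq_add {f g : K → ℕ+} {m : ℕ} (h : ∀ k, (g k : ℕ) = f k + m) :
    nf one g = prependPow one m (nf one f) := by
  have hmu : mu g - 1 = m + (mu f - 1) := by
    have := one_le_mu f
    rw [mu_of_coe_eq_add h]
    omega
  rw [nf, nf, hmu, atomPart_of_coe_eq_add h, prependPow_add]

theorem nf_atom (a : PAtoms K) : nf one a.1 = FreeSemigroup.of a := by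
  rw [nf, mu_atom, atomPart_atom]
  rfl

theorem conGen_of_mul_of (a b : PAtoms K) :
    conGen (PRel one) (FreeSemigroup.of a * FreeSemigroup.of b) (nf one (a.1 + b.1)) := by
  refine ConGen.Rel.of _ _
    ⟨a, b, atomPart (a.1 + b.1), mu (a.1 + b.1) - 1, ?_, fun k => ?_, rfl, rfl⟩
  · simp only [mu, Pi.add_apply, PNat.add_coe]
  · have := coe_eq_atomPart_add (a.1 + b.1) k
    simp only [Pi.add_apply, PNat.add_coe] at this
    omega

variable {one} (hone : one.1 = fun _ => 1)
include hone

theorem toAdd_phi_nf (f : K → ℕ+) : (phi (nf one f)).toAdd = f := by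
  funext k
  apply PNat.coe_injective
  rw [nf, coe_toAdd_phi_prependPow hone, toAdd_phi_of, coe_eq_atomPart_add f k, add_comm]

theorem conGen_of_mul_of_one (a : PAtoms K) :
    conGen (PRel one) (FreeSemigroup.of a * FreeSemigroup.of one)
      (FreeSemigroup.of one * FreeSemigroup.of a) := by
  have hsum : ∀ k, (a.1 k : ℕ) + (one.1 k : ℕ) = a.1 k + 1 := by simp [hone]
  refine ConGen.Rel.of _ _ ⟨a, one, a, 1, ?_, fun k => by rw [hsum]; omega, rfl, rfl⟩
  show 1 = mu (a.1 + one.1) - 1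
  rw [mu_of_coe_eq_add (f := a.1) (g := a.1 + one.1) (fun k => hsum k), mu_atom]

theorem conGen_of_mul_nf (a : PAtoms K) (g : K → ℕ+) :
    conGen (PRel one) (FreeSemigroup.of a * nf one g) (nf one (a.1 + g)) := by
  have hshift : ∀ k, ((a.1 + g) k : ℕ) = (a.1 + (atomPart g).1) k + (mu g - 1) := fun k => by
    simp only [Pi.add_apply, PNat.add_coe, coe_eq_atomPart_add g k, add_assoc]
  rw [nf_of_coe_eq_add one hshift]
  exact (conGen (PRel one)).trans
    ((conGen (PRel one)).of_mul_prependPow_rel one (conGen_of_mul_of_one hone a) _ _)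
    ((conGen (PRel one)).prependPow_rel one _ (conGen_of_mul_of one a (atomPart g)))

theorem conGen_nf_phi (u : FreeSemigroup (PAtoms K)) :
    conGen (PRel one) u (nf one (phi u).toAdd) := by
  induction u using FreeSemigroup.recOnMul with
  | ih1 a =>
    rw [toAdd_phi_of, nf_atom]
    exact (conGen (PRel one)).refl _
  | ih2 a w _ ihw =>
    rw [toAdd_phi_mul, toAdd_phi_of]
    exact (conGen (PRel one)).trans ((conGen (PRel one)).mul ((conGen (PRel one)).refl _) ihw)
      (conGen_of_mul_nf hone a _)

end Presentation

/-- **Theorem 5.** `ℙ^K` has presentation `⟨X | R⟩` via `φ`: the homomorphism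
`φ` from the free semigroup on the atoms of `ℙ^K` to `ℙ^K` (regarded
multiplicatively) sending `x_a ↦ a` is surjective, and its kernel congruence is
the congruence generated by `R`. -/
theorem presentation_PK {K : Type*} [Nonempty K]
    (one : PAtoms K) (hone : one.1 = fun _ => 1) :
    Function.Surjective
      (FreeSemigroup.lift (fun a : PAtoms K => Multiplicative.ofAdd a.1) :
        FreeSemigroup (PAtoms K) →ₙ* Multiplicative (K → ℕ+)) ∧
    Con.ker
      (FreeSemigroup.lift (fun a : PAtoms K => Multiplicative.ofAdd a.1) :
        FreeSemigroup (PAtoms K) →ₙ* Multiplicative (K → ℕ+)) =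
    conGen (PRel one) :=
  ⟨fun f => ⟨nf one f.toAdd, congrArg Multiplicative.ofAdd (toAdd_phi_nf hone f.toAdd)⟩,
    Con.ker_eq_of_rel_section phi (fun f => nf one f.toAdd) (conGen_le_ker_phi hone)
      (conGen_nf_phi hone)⟩
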